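/- Let n ≥ 1 and let p(x) = Σ_{l=0}^{n} G_l(x)·x^{n−l}. Then for each k with 0 ≤ k ≤ n, the k-th derivative of p is given by p^{(k)}(x) = ((n+1)!/(n−k+1)!)·Σ_{l=k}^{n} G_{l−k}(x)·x^{n−l}. -/

import Mathlib

open Finset

/-- The Bernoulli polynomial `Bₙ(x)`, with generating function `t·e^{xt}/(e^t−1)`. -/
noncomputable def bernoulliPoly (n : ℕ) (x : ℝ) : ℝ :=
  Polynomial.eval x ((Polynomial.bernoulli n).map (algebraMap ℚ ℝ))

/-- The Genocchi polynomial `Gₙ(x) = 2·Bₙ(x) − 2^{n+1}·Bₙ(x/2)`, with generating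
function `2t·e^{xt}/(e^t+1)`. -/
noncomputable def genocchiPoly (n : ℕ) (x : ℝ) : ℝ :=
  2 * bernoulliPoly n x - 2 ^ (n + 1) * bernoulliPoly n (x / 2)

/-- The Genocchi number `Gₙ = Gₙ(0)`. -/
noncomputable def genocchi (n : ℕ) : ℝ := genocchiPoly n 0

/-- The Euler polynomial `Eₙ(x) = (2·B_{n+1}(x) − 2^{n+2}·B_{n+1}(x/2))/(n+1)`, with
generating function `2·e^{xt}/(e^t+1)`. -/
noncomputable def eulerPoly (n : ℕ) (x : ℝ) : ℝ :=
  (2 * bernoulliPoly (n + 1) x - 2 ^ (n + 2) * bernoulliPoly (n + 1) (x / 2)) / (n + 1)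

/-- The Euler number (at zero) `Eₙ = Eₙ(0)`. -/
noncomputable def eulerNum (n : ℕ) : ℝ := eulerPoly n 0


/-
The Genocchi polynomials form an Appell sequence, `G_l' = l·G_{l-1}`, and so does `y ↦ y^j`.
For any Appell sequence `f`, the convolution `p_n = ∑_{i+j=n} f_i(y)·y^j` therefore satisfies
`p_{n+1}' = ∑_{i+j=n} ((i+1) + (j+1))·f_i(y)·y^j = (n+2)·p_n`, and iterating gives
`p_n^{(k)} = (n+1)(n)⋯(n-k+2)·p_{n-k}`.
-/

lemma hasDerivAt_bernoulliPoly (n : ℕ) (x : ℝ) :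
    HasDerivAt (bernoulliPoly n) (n * bernoulliPoly (n - 1) x) x := by
  have h := ((Polynomial.bernoulli n).map (algebraMap ℚ ℝ)).hasDerivAt x
  rwa [Polynomial.derivative_map, Polynomial.derivative_bernoulli, Polynomial.map_mul,
    Polynomial.map_natCast, Polynomial.eval_mul, Polynomial.eval_natCast] at h

lemma hasDerivAt_genocchiPoly (n : ℕ) (x : ℝ) :
    HasDerivAt (genocchiPoly n) (n * genocchiPoly (n - 1) x) x := by
  have hhalf : HasDerivAt (fun y : ℝ => bernoulliPoly n (y / 2))
      (n * bernoulliPoly (n - 1) (x / 2) * (1 / 2)) x :=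
    (hasDerivAt_bernoulliPoly n (x / 2)).comp (h := fun y => y / 2) x
      ((hasDerivAt_id' x).div_const 2)
  refine (((hasDerivAt_bernoulliPoly n x).const_mul 2).sub
    (hhalf.const_mul (2 ^ (n + 1)))).congr_deriv ?_
  cases n with
  | zero => simp
  | succ m => simp only [genocchiPoly, Nat.add_sub_cancel]; push_cast; ring

section Appell

variable {𝕜 : Type*} [NontriviallyNormedField 𝕜]

noncomputable def appellConv (f : ℕ → 𝕜 → 𝕜) (n : ℕ) (y : 𝕜) : 𝕜 :=
  ∑ p ∈ antidiagonal n, f p.1 y * y ^ p.2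

variable {f : ℕ → 𝕜 → 𝕜}

lemma hasDerivAt_appellConv_succ (hf : ∀ l x, HasDerivAt (f l) (l * f (l - 1) x) x)
    (n : ℕ) (x : 𝕜) :
    HasDerivAt (appellConv f (n + 1)) ((n + 2) * appellConv f n x) x := by
  have hterm : ∀ p ∈ antidiagonal (n + 1), HasDerivAt (fun y => f p.1 y * y ^ p.2)
      (p.1 * f (p.1 - 1) x * x ^ p.2 + f p.1 x * (p.2 * x ^ (p.2 - 1))) x :=
    fun p _ => (hf p.1 x).mul (hasDerivAt_pow p.2 x)
  refine (HasDerivAt.fun_sum hterm).congr_deriv ?_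
  rw [Finset.sum_add_distrib, Finset.Nat.sum_antidiagonal_succ,
    Finset.Nat.sum_antidiagonal_succ' (f := fun p => f p.1 x * (p.2 * x ^ (p.2 - 1))),
    appellConv, Finset.mul_sum]
  simp only [Nat.cast_zero, zero_mul, mul_zero, zero_add, Nat.add_sub_cancel]
  rw [← Finset.sum_add_distrib]
  refine Finset.sum_congr rfl fun p hp => ?_
  have hn : (n : 𝕜) = p.1 + p.2 := by rw [← mem_antidiagonal.mp hp]; push_cast; ring
  rw [hn]; push_cast; ring

lemma iteratedDeriv_appellConv (hf : ∀ l x, HasDerivAt (f l) (l * f (l - 1) x) x)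
    {k n : ℕ} (hk : k ≤ n) :
    iteratedDeriv k (appellConv f n) =
      fun y => ((n + 1).descFactorial k : 𝕜) * appellConv f (n - k) y := by
  induction k with
  | zero => simp
  | succ k ih =>
    obtain ⟨m, hm⟩ : ∃ m, n - k = m + 1 := ⟨n - k - 1, by omega⟩
    ext y
    rw [iteratedDeriv_succ, ih (by omega), hm,
      ((hasDerivAt_appellConv_succ hf m y).const_mul _).deriv, Nat.descFactorial_succ,
      show n - (k + 1) = m by omega, show n + 1 - k = m + 2 by omega]
    push_cast; ring

end Appell

theorem iteratedDeriv_sum_genocchi_pow_general (n : ℕ) (k : ℕ) (hk : k ≤ n) (x : ℝ) :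
    iteratedDeriv k (fun y : ℝ => ∑ l ∈ Finset.range (n + 1), genocchiPoly l y * y ^ (n - l)) x =
      (((n + 1).factorial : ℝ) / ((n - k + 1).factorial : ℝ)) *
        ∑ l ∈ Finset.Icc k n, genocchiPoly (l - k) x * x ^ (n - l) := by
  have hsum : (fun y : ℝ => ∑ l ∈ Finset.range (n + 1), genocchiPoly l y * y ^ (n - l)) =
      appellConv genocchiPoly n := by
    ext y; rw [appellConv, Finset.Nat.sum_antidiagonal_eq_sum_range_succ_mk]
  have hcoeff : ((n + 1).descFactorial k : ℝ) = (n + 1).factorial / (n - k + 1).factorial := by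
    rw [eq_div_iff (by positivity), ← Nat.factorial_mul_descFactorial (by omega : k ≤ n + 1),
      show n + 1 - k = n - k + 1 by omega]
    push_cast; ring
  have hIcc : ∑ l ∈ Finset.Icc k n, genocchiPoly (l - k) x * x ^ (n - l) =
      appellConv genocchiPoly (n - k) x := by
    rw [appellConv, Finset.Nat.sum_antidiagonal_eq_sum_range_succ_mk,
      ← Finset.Ico_add_one_right_eq_Icc, Finset.sum_Ico_eq_sum_range,
      show n + 1 - k = n - k + 1 by omega]
    refine Finset.sum_congr rfl fun i _ => ?_
    rw [Nat.add_sub_cancel_left, Nat.sub_add_eq, Nat.sub_sub, Nat.add_comm]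
  rw [hsum, iteratedDeriv_appellConv hasDerivAt_genocchiPoly hk, hcoeff, hIcc]

theorem iteratedDeriv_sum_genocchi_pow (n : ℕ) (hn : 1 ≤ n) (k : ℕ) (hk : k ≤ n) (x : ℝ) :
    iteratedDeriv k (fun y : ℝ => ∑ l ∈ Finset.range (n + 1), genocchiPoly l y * y ^ (n - l)) x =
      (((n + 1).factorial : ℝ) / ((n - k + 1).factorial : ℝ)) *
        ∑ l ∈ Finset.Icc k n, genocchiPoly (l - k) x * x ^ (n - l) :=
  iteratedDeriv_sum_genocchi_pow_general n k hk x
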